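/- Every 2-coloring of the edges of the complete bipartite graph K_{12,12} contains a monochromatic copy of K_{2,3}. -/

import Mathlib

open SimpleGraph

/-- `H` has a copy (injective homomorphism image) in `G`. -/
def Contains {V W : Type*} (G : SimpleGraph V) (H : SimpleGraph W) : Prop :=
  ∃ f : W → V, Function.Injective f ∧ ∀ a b, H.Adj a b → G.Adj (f a) (f b)

/-- There is a copy of `H` in `G` all of whose edges get color `b` under the 2-coloring `c`. -/
def IsMonoCopyIn {V W : Type*} (H : SimpleGraph W) (G : SimpleGraph V)
    (c : Sym2 V → Bool) (b : Bool) : Prop :=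
  ∃ f : W → V, Function.Injective f ∧
    ∀ a a', H.Adj a a' → G.Adj (f a) (f a') ∧ c s(f a, f a') = b

/-- `G` arrows `H`: every 2-coloring of the edges of `G` has a monochromatic copy of `H`. -/
def Arrows {V W : Type*} (G : SimpleGraph V) (H : SimpleGraph W) : Prop :=
  ∀ c : Sym2 V → Bool, ∃ b, IsMonoCopyIn H G c b

/-- The Turán extremal number: the largest number of edges of an `n`-vertex `H`-free graph. -/
noncomputable def exNum {W : Type*} (n : ℕ) (H : SimpleGraph W) : ℕ :=
  sSup {m | ∃ G : SimpleGraph (Fin n), ¬ Contains G H ∧ G.edgeSet.ncard = m}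

/-
Count the triples `(u, v, w)` with `u` on the right, `v ≠ w` on the left and the edges `uv`, `uw`
of the same colour. Splitting the `m` left neighbours of a fixed `u` into two colour classes gives
at least `m (m - 2) / 2` such ordered pairs `(v, w)`, hence at least `n m (m - 2) / 2` triples. On
the other hand, if there is no monochromatic `K_{2,t}`, then each pair `v ≠ w` has fewer than `t`
common neighbours `u` in each colour, so there are at most `2 (t - 1) m (m - 1)` triples. For
`m = n = 12`, `t = 3` this is the contradiction `720 ≤ 528`.
-/

open Finset

variable {α β : Type*}

theorem isMonoCopyIn_completeBipartiteGraph_of_embedding {W₁ W₂ : Type*}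
    {c : Sym2 (α ⊕ β) → Bool} {b : Bool} (f : W₁ ↪ α) (g : W₂ ↪ β)
    (hc : ∀ i j, c s(.inl (f i), .inr (g j)) = b) :
    IsMonoCopyIn (completeBipartiteGraph W₁ W₂) (completeBipartiteGraph α β) c b := by
  refine ⟨Sum.map f g, Sum.map_injective.2 ⟨f.injective, g.injective⟩, ?_⟩
  rintro (i | j) (i' | j') hadj
  · simp at hadj
  · exact ⟨by simp, hc i j'⟩
  · exact ⟨by simp, by rw [Sym2.eq_swap]; exact hc i' j⟩
  · simp at hadj

theorem le_two_mul_card_filter_offDiag_eq [DecidableEq α] (s : Finset α) (f : α → Bool) :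
    #s * (#s - 2) ≤ 2 * #(s.offDiag.filter fun p => f p.1 = f p.2) := by
  have hsplit : s.offDiag.filter (fun p => f p.1 = f p.2) =
      (s.filter (f · = true)).offDiag ∪ (s.filter (f · = false)).offDiag := by
    ext ⟨x, y⟩
    cases hx : f x <;> cases hy : f y <;> simp [hx, hy]
  have hdisj : Disjoint (s.filter (f · = true)).offDiag (s.filter (f · = false)).offDiag :=
    disjoint_left.2 fun p hp hq => by simp_all
  have hcard := card_filter_add_card_filter_not (s := s) (p := (f · = true))
  simp only [Bool.not_eq_true] at hcard
  rw [hsplit, card_union_of_disjoint hdisj, offDiag_card, offDiag_card]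
  generalize #(s.filter (f · = true)) = a, #(s.filter (f · = false)) = b at hcard ⊢
  rw [← hcard]
  have ha := Nat.le_mul_self a
  have hb := Nat.le_mul_self b
  rcases Nat.lt_or_ge (a + b) 2 with h | h
  · simp [Nat.sub_eq_zero_of_le h.le]
  · zify [ha, hb, h]
    nlinarith [sq_nonneg ((a : ℤ) - b)]

theorem card_filter_both_eq_lt_of_not_isMonoCopyIn [Fintype β] {c : Sym2 (α ⊕ β) → Bool}
    {b : Bool} {t : ℕ} (hno : ¬ IsMonoCopyIn (completeBipartiteGraph (Fin 2) (Fin t))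
      (completeBipartiteGraph α β) c b)
    {v w : α} (hvw : v ≠ w) :
    #{u | c s(.inl v, .inr u) = b ∧ c s(.inl w, .inr u) = b} < t := by
  classical
  by_contra! h
  obtain ⟨f, hf⟩ := Function.Embedding.exists_of_card_le_finset (α := Fin 2) (s := {v, w})
    (by simp [card_pair hvw])
  obtain ⟨g, hg⟩ := Function.Embedding.exists_of_card_le_finset (α := Fin t) (by simpa using h)
  refine hno (isMonoCopyIn_completeBipartiteGraph_of_embedding f g fun i j => ?_)
  have hgj := mem_filter.1 (hg ⟨j, rfl⟩)
  rcases mem_insert.1 (hf ⟨i, rfl⟩) with hi | hi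
  · rw [hi]; exact hgj.2.1
  · rw [mem_singleton.1 hi]; exact hgj.2.2

theorem card_filter_eq_le_of_not_isMonoCopyIn [Fintype β] {c : Sym2 (α ⊕ β) → Bool} {t : ℕ}
    (hno : ∀ b, ¬ IsMonoCopyIn (completeBipartiteGraph (Fin 2) (Fin t))
      (completeBipartiteGraph α β) c b)
    {v w : α} (hvw : v ≠ w) :
    #{u | c s(.inl v, .inr u) = c s(.inl w, .inr u)} ≤ 2 * (t - 1) := by
  classical
  have hsub : ({u | c s(.inl v, .inr u) = c s(.inl w, .inr u)} : Finset β) ⊆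
      univ.biUnion fun b => {u | c s(.inl v, .inr u) = b ∧ c s(.inl w, .inr u) = b} :=
    fun u hu => mem_biUnion.2
      ⟨_, mem_univ _, mem_filter.2 ⟨mem_univ _, rfl, (mem_filter.1 hu).2.symm⟩⟩
  have htrue := card_filter_both_eq_lt_of_not_isMonoCopyIn (hno true) hvw
  have hfalse := card_filter_both_eq_lt_of_not_isMonoCopyIn (hno false) hvw
  calc _ ≤ _ := card_le_card hsub
    _ ≤ _ := card_biUnion_le
    _ ≤ 2 * (t - 1) := by rw [Fintype.sum_bool]; omega

theorem arrows_completeBipartiteGraph_fin_two [Fintype α] [Fintype β] {t : ℕ}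
    (h : 4 * (t - 1) * (Fintype.card α - 1) < Fintype.card β * (Fintype.card α - 2)) :
    Arrows (completeBipartiteGraph α β) (completeBipartiteGraph (Fin 2) (Fin t)) := by
  classical
  intro c
  by_contra! hno
  set m := Fintype.card α
  let sameColor (u : β) (p : α × α) : Prop := c s(.inl p.1, .inr u) = c s(.inl p.2, .inr u)
  have hlow : ∀ u ∈ (univ : Finset β),
      m * (m - 2) ≤ 2 * #(univ.offDiag.bipartiteAbove sameColor u) :=
    fun u _ => le_two_mul_card_filter_offDiag_eq univ (fun v => c s(.inl v, .inr u))
  have hup : ∀ p ∈ (univ : Finset α).offDiag,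
      #(univ.bipartiteBelow sameColor p) ≤ 2 * (t - 1) :=
    fun p hp => card_filter_eq_le_of_not_isMonoCopyIn hno (mem_offDiag.1 hp).2.2
  have hcount : Fintype.card β * (m * (m - 2)) ≤ 2 * ((m * m - m) * (2 * (t - 1))) := by
    calc Fintype.card β * (m * (m - 2)) = ∑ _u : β, m * (m - 2) := by simp
      _ ≤ ∑ u : β, 2 * #(univ.offDiag.bipartiteAbove sameColor u) := sum_le_sum hlow
      _ = 2 * ∑ p ∈ (univ : Finset α).offDiag, #(univ.bipartiteBelow sameColor p) := by
        rw [← mul_sum, sum_card_bipartiteAbove_eq_sum_card_bipartiteBelow]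
      _ ≤ 2 * ((m * m - m) * (2 * (t - 1))) := by
        gcongr
        simpa [offDiag_card] using sum_le_card_nsmul _ _ _ hup
  have hm : 0 < m := Nat.pos_of_ne_zero fun hm => by simp [m, hm] at h
  rw [← Nat.mul_sub_one] at hcount
  have := Nat.mul_lt_mul_of_pos_left h hm
  nlinarith

/-- Every 2-coloring of the edges of `K_{12,12}` contains a monochromatic copy of
`K_{2,3}`. -/
theorem stmt6 :
    Arrows (completeBipartiteGraph (Fin 12) (Fin 12))
      (completeBipartiteGraph (Fin 2) (Fin 3)) :=
  arrows_completeBipartiteGraph_fin_two (by simp)
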